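/- If L ⊆ M_{n,ℓ,t} is a t-spread strongly stable set, then its t-spread shadow Shad_t(L) ⊆ M_{n,ℓ+1,t} is also a t-spread strongly stable set. -/

import Mathlib

open Multiset Finset

/-- A monomial in `K[x_1,…,x_n]` is encoded by the multiset of its variable
indices (each index lies in `[1, n]`).  `TSpread n d t u` says that `u` is a
t-spread monomial: its degree is at most `d`, its indices lie in `[1,n]`, and
consecutive indices `j_k ≤ j_{k+1}` of its sorted index list satisfy
`j_{k+1} - j_k ≥ t_k` (here `t 1 = t_1, …, t (d-1) = t_{d-1}`). -/
def TSpread (n d : ℕ) (t : ℕ → ℕ) (u : Multiset ℕ) : Prop :=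
  u.card ≤ d ∧ (∀ i ∈ u, 1 ≤ i ∧ i ≤ n) ∧
    ∀ k : ℕ, k + 1 < u.card →
      (u.sort (· ≤ ·)).getD k 0 + t (k + 1) ≤ (u.sort (· ≤ ·)).getD (k + 1) 0

/-- `Mset n d ℓ t` : the set `M_{n,ℓ,t}` of t-spread monomials of degree `ℓ`. -/
def Mset (n d ℓ : ℕ) (t : ℕ → ℕ) : Set (Multiset ℕ) :=
  {u | TSpread n d t u ∧ u.card = ℓ}

/-- the t-spread shadow `Shad_t(L) = {x_i w : w ∈ L, x_i w t-spread, i = 1..n}`. -/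
def Shad (n d : ℕ) (t : ℕ → ℕ) (L : Set (Multiset ℕ)) : Set (Multiset ℕ) :=
  {v | ∃ w ∈ L, ∃ i, 1 ≤ i ∧ i ≤ n ∧ v = i ::ₘ w ∧ TSpread n d t v}

/-- largest variable index dividing `u` (0 for the constant monomial). -/
def maxVar (u : Multiset ℕ) : ℕ := (u.sort (· ≤ ·)).getLastD 0

/-- `lexGE u v` : `u ≥_lex v` for monomials of equal degree, where the
lexicographic order is induced by `x_1 > x_2 > ⋯ > x_n`. -/
def lexGE (u v : Multiset ℕ) : Prop :=
  u = v ∨ List.Lex (· < ·) (u.sort (· ≤ ·)) (v.sort (· ≤ ·))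

/-- `L` is a t-spread strongly stable set. -/
def StronglyStableSet (n d : ℕ) (t : ℕ → ℕ) (L : Set (Multiset ℕ)) : Prop :=
  ∀ u ∈ L, ∀ i ∈ u, ∀ j : ℕ, 1 ≤ j → j < i →
    TSpread n d t (j ::ₘ u.erase i) → (j ::ₘ u.erase i) ∈ L

/-- `L` is a t-spread lex set (inside `M_{n,ℓ,t}`). -/
def LexSet (n d ℓ : ℕ) (t : ℕ → ℕ) (L : Set (Multiset ℕ)) : Prop :=
  ∀ u ∈ L, ∀ v ∈ Mset n d ℓ t, lexGE v u → v ∈ L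

/-- `m_i(L)` : number of monomials of `L` with largest variable index `i`. -/
noncomputable def mEq (i : ℕ) (L : Set (Multiset ℕ)) : ℕ :=
  {u ∈ L | maxVar u = i}.ncard

/-- `m_{≤ i}(L)` : number of monomials of `L` with largest variable index `≤ i`. -/
noncomputable def mLe (i : ℕ) (L : Set (Multiset ℕ)) : ℕ :=
  {u ∈ L | maxVar u ≤ i}.ncard

/-- `I` is (the set of monomials of) a monomial ideal of `K[x_1,…,x_n]`. -/
def MonIdeal (n : ℕ) (I : Set (Multiset ℕ)) : Prop :=
  (∀ u ∈ I, ∀ i ∈ u, 1 ≤ i ∧ i ≤ n) ∧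
    ∀ u ∈ I, ∀ i : ℕ, 1 ≤ i → i ≤ n → (i ::ₘ u) ∈ I

/-- `I` is generated by t-spread monomials. -/
def TSpreadGen (n d : ℕ) (t : ℕ → ℕ) (I : Set (Multiset ℕ)) : Prop :=
  ∀ u ∈ I, ∃ v ∈ I, TSpread n d t v ∧ v ≤ u

/-- The t-spread operator `a ↦ a^{(n,ℓ,t)}`:  if `a = Σ_{j=p}^{ℓ} C(a_j, j)` is
the Macaulay expansion of `a` with respect to `ℓ`, then
`tOp t_ℓ ℓ a = Σ_{j=p+1}^{ℓ+1} C(a_{j-1} + 1 - t_ℓ, j)`, computed greedily. -/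
noncomputable def tOp (s : ℕ) : ℕ → ℕ → ℕ
  | 0, _ => 0
  | ℓ + 1, a =>
    if a = 0 then 0
    else
      (sSup {b | Nat.choose b (ℓ + 1) ≤ a} + 1 - s).choose (ℓ + 2) +
        tOp s ℓ (a - Nat.choose (sSup {b | Nat.choose b (ℓ + 1) ≤ a}) (ℓ + 1))

/-- The graded Betti number `β_{i,j}(I)` of a t-spread strongly stable ideal,
via the Eliahou–Kervaire-type formula
`β_{i,i+q}(I) = Σ_{u ∈ G(I)_q} C(max(u) - 1 - Σ_{h=1}^{q-1} t_h, i)`. -/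
noncomputable def betti (t : ℕ → ℕ) (I : Set (Multiset ℕ)) (i j : ℕ) : ℕ :=
  ∑ᶠ u ∈ {u ∈ I | u.card = j - i ∧ ∀ v ∈ I, v ≤ u → v = u},
    (maxVar u - 1 - ∑ h ∈ Finset.Icc 1 (j - i - 1), t h).choose i

/-
Removing the largest variable from a t-spread monomial only drops the last entry of its sorted
index list, so the result is again t-spread. Consequently, when `L` is strongly stable, every
`v ∈ Shad_t(L)` satisfies `v / x_{max v} ∈ L`: writing `v = x_i w` with `w ∈ L` and `i < max v`,
the monomial `v / x_{max v} = x_i (w / x_{max v})` arises from `w` by a t-spread move.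

Now take `v ∈ Shad_t(L)` with `m = max v`, `w = v / x_m ∈ L`, and a t-spread move
`v' = x_j (v / x_a)`, `j < a`. If `a = m`, then `v' = x_j w` lies in the shadow by definition.
Otherwise `max v' = m` and `v' = x_m · x_j (w / x_a)`, where `x_j (w / x_a) = v' / x_m` is t-spread
and hence lies in `L` by strong stability.
-/

section MaxVar

variable {u : Multiset ℕ}

lemma exists_sort_eq_append_maxVar (hu : u ≠ 0) :
    ∃ l : List ℕ, u.sort (· ≤ ·) = l ++ [maxVar u] := by
  rcases List.eq_nil_or_concat (u.sort (· ≤ ·)) with h | ⟨l, x, h⟩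
  · exact absurd (by rw [← Multiset.sort_eq u (· ≤ ·), h]; rfl) hu
  · exact ⟨l, by simp [maxVar, h]⟩

lemma maxVar_mem (hu : u ≠ 0) : maxVar u ∈ u := by
  obtain ⟨l, hl⟩ := exists_sort_eq_append_maxVar hu
  rw [← Multiset.mem_sort (· ≤ ·), hl]
  exact List.mem_append_right l (List.mem_singleton_self _)

lemma le_maxVar {x : ℕ} (hx : x ∈ u) : x ≤ maxVar u := by
  obtain ⟨l, hl⟩ :=
    exists_sort_eq_append_maxVar (ne_of_mem_of_not_mem' hx (Multiset.notMem_zero x))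
  have hsorted := Multiset.pairwise_sort u (· ≤ ·)
  rw [← Multiset.mem_sort (· ≤ ·), hl] at hx
  rw [hl, List.pairwise_append] at hsorted
  rcases List.mem_append.1 hx with hx | hx
  · exact hsorted.2.2 x hx _ (List.mem_singleton_self _)
  · exact (List.mem_singleton.1 hx).le

lemma maxVar_eq_of_forall_le {x : ℕ} (hx : x ∈ u) (h : ∀ y ∈ u, y ≤ x) : maxVar u = x :=
  le_antisymm (h _ (maxVar_mem (ne_of_mem_of_not_mem' hx (Multiset.notMem_zero x)))) (le_maxVar hx)

lemma sort_eq_sort_erase_maxVar_append (hu : u ≠ 0) :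
    u.sort (· ≤ ·) = (u.erase (maxVar u)).sort (· ≤ ·) ++ [maxVar u] := by
  obtain ⟨l, hl⟩ := exists_sort_eq_append_maxVar hu
  generalize maxVar u = m at hl ⊢
  have hl_sorted : l.Pairwise (· ≤ ·) := by
    have := Multiset.pairwise_sort u (· ≤ ·)
    rw [hl, List.pairwise_append] at this
    exact this.1
  have hu_eq : u = m ::ₘ (l : Multiset ℕ) := by
    rw [← Multiset.sort_eq u (· ≤ ·), hl]
    exact Multiset.coe_eq_coe.2 (List.perm_append_singleton _ _)
  rw [hl, hu_eq, Multiset.erase_cons_head, Multiset.coe_sort, List.mergeSort_eq_self _ hl_sorted]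

end MaxVar

section Shadow

variable {n d : ℕ} {t : ℕ → ℕ} {L : Set (Multiset ℕ)}

lemma TSpread.erase_maxVar {u : Multiset ℕ} (h : TSpread n d t u) :
    TSpread n d t (u.erase (maxVar u)) := by
  rcases eq_or_ne u 0 with rfl | hu
  · simpa using h
  obtain ⟨hcard, hrange, hgap⟩ := h
  refine ⟨Multiset.card_erase_le.trans hcard, fun i hi => hrange i (Multiset.mem_of_mem_erase hi),
    fun k hk => ?_⟩
  have hlen : ((u.erase (maxVar u)).sort (· ≤ ·)).length = (u.erase (maxVar u)).card :=
    Multiset.length_sort _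
  have hgapk := hgap k (by rw [← Multiset.card_erase_add_one (maxVar_mem hu)]; omega)
  rwa [sort_eq_sort_erase_maxVar_append hu, List.getD_append _ _ _ _ (by omega),
    List.getD_append _ _ _ _ (by omega)] at hgapk

lemma cons_mem_shad {w : Multiset ℕ} {i : ℕ} (hw : w ∈ L) (h : TSpread n d t (i ::ₘ w)) :
    i ::ₘ w ∈ Shad n d t L :=
  ⟨w, hw, i, (h.2.1 i (Multiset.mem_cons_self i w)).1, (h.2.1 i (Multiset.mem_cons_self i w)).2,
    rfl, h⟩

lemma shad_subset_mset {ℓ : ℕ} (hLM : L ⊆ Mset n d ℓ t) :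
    Shad n d t L ⊆ Mset n d (ℓ + 1) t := by
  rintro v ⟨w, hw, i, -, -, rfl, hv⟩
  exact ⟨hv, by rw [Multiset.card_cons, (hLM hw).2]⟩

lemma StronglyStableSet.erase_maxVar_mem_of_mem_shad (hss : StronglyStableSet n d t L)
    {v : Multiset ℕ} (hv : v ∈ Shad n d t L) : v.erase (maxVar v) ∈ L := by
  obtain ⟨w, hw, i, hi, -, rfl, hv⟩ := hv
  rcases eq_or_ne i (maxVar (i ::ₘ w)) with him | him
  · rwa [← him, Multiset.erase_cons_head]
  have hmw : maxVar (i ::ₘ w) ∈ w :=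
    (Multiset.mem_cons.1 (maxVar_mem (Multiset.cons_ne_zero))).resolve_left him.symm
  have hlt : i < maxVar (i ::ₘ w) := (le_maxVar (Multiset.mem_cons_self i w)).lt_of_ne him
  have hspread := hv.erase_maxVar
  rw [Multiset.erase_cons_tail _ him] at hspread ⊢
  exact hss w hw _ hmw i hi hlt hspread

lemma StronglyStableSet.shad (hss : StronglyStableSet n d t L) :
    StronglyStableSet n d t (Shad n d t L) := by
  intro v hv a ha j hj hja hv'
  have hw := hss.erase_maxVar_mem_of_mem_shad hv
  rcases (le_maxVar ha).eq_or_lt with rfl | ham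
  · exact cons_mem_shad hw hv'
  set m := maxVar v
  have hm : m ∈ v.erase a :=
    (Multiset.mem_erase_of_ne ham.ne').2
      (maxVar_mem (ne_of_mem_of_not_mem' ha (Multiset.notMem_zero a)))
  have hmax : maxVar (j ::ₘ v.erase a) = m := by
    refine maxVar_eq_of_forall_le (Multiset.mem_cons_of_mem hm) fun y hy => ?_
    rcases Multiset.mem_cons.1 hy with rfl | hy
    · omega
    · exact le_maxVar (Multiset.mem_of_mem_erase hy)
  have hv'_eq : j ::ₘ v.erase a = m ::ₘ j ::ₘ (v.erase m).erase a := by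
    rw [Multiset.cons_swap, Multiset.erase_comm, Multiset.cons_erase hm]
  have hL : j ::ₘ (v.erase m).erase a ∈ L := by
    refine hss _ hw a ((Multiset.mem_erase_of_ne ham.ne).2 ha) j hj hja ?_
    have := hv'.erase_maxVar
    rwa [hmax, hv'_eq, Multiset.erase_cons_head] at this
  rw [hv'_eq] at hv' ⊢
  exact cons_mem_shad hL hv'

end Shadow

theorem stmt2_general (n d ℓ : ℕ) (t : ℕ → ℕ)
    (L : Set (Multiset ℕ)) (hLM : L ⊆ Mset n d ℓ t)
    (hss : StronglyStableSet n d t L) :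
    Shad n d t L ⊆ Mset n d (ℓ + 1) t ∧
      StronglyStableSet n d t (Shad n d t L) :=
  ⟨shad_subset_mset hLM, hss.shad⟩

/-- the t-spread shadow of a t-spread strongly stable set
`L ⊆ M_{n,ℓ,t}` is a t-spread strongly stable subset of `M_{n,ℓ+1,t}`. -/
theorem stmt2 (n d ℓ : ℕ) (t : ℕ → ℕ) (hd : 2 ≤ d) (hℓ : ℓ ≤ d)
    (L : Set (Multiset ℕ)) (hLM : L ⊆ Mset n d ℓ t)
    (hss : StronglyStableSet n d t L) :
    Shad n d t L ⊆ Mset n d (ℓ + 1) t ∧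
      StronglyStableSet n d t (Shad n d t L) :=
  stmt2_general n d ℓ t L hLM hss
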